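/- Let W be a weak fundamental localizer. A square in Cat, given by u : A → B, u' : A' → B', v : A' → A, w : B' → B and α : u ∘ v ⟶ w ∘ u', is W-exact if and only if the opposite square, given by u'ᵒᵖ : A'ᵒᵖ → B'ᵒᵖ, vᵒᵖ : A'ᵒᵖ → Aᵒᵖ, wᵒᵖ : B'ᵒᵖ → Bᵒᵖ, uᵒᵖ : Aᵒᵖ → Bᵒᵖ, with 2-cell αᵒᵖ : wᵒᵖ ∘ u'ᵒᵖ ⟶ uᵒᵖ ∘ vᵒᵖ obtained from α by passing to opposite categories, is W-exact. -/

import Mathlib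

open CategoryTheory

universe u

namespace Paper

/-- A class of functors between small categories. -/
abbrev FunctorClass : Type (u + 1) :=
  ∀ ⦃A B : Type u⦄ [SmallCategory A] [SmallCategory B], (A ⥤ B) → Prop

/-- The punctual category `e`. -/
abbrev PtCat : Type u := Discrete PUnit.{u + 1}

/-- The category `A` is `W`-aspherical: the functor `A ⥤ e` lies in `W`. -/
def IsAsphericalCat (W : FunctorClass.{u}) (A : Type u) [SmallCategory A] : Prop :=
  W (Functor.star A)

/-- The functor `F : A ⥤ B` is `W`-aspherical: every comma category `A/b` is `W`-aspherical. -/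
def IsAsphericalFunctor (W : FunctorClass.{u}) {A B : Type u} [SmallCategory A]
    [SmallCategory B] (F : A ⥤ B) : Prop :=
  ∀ b : B, IsAsphericalCat W (CostructuredArrow F b)

/-- The functor `F : A ⥤ B` is `W`-coaspherical: every comma category `b\A` is `W`-aspherical. -/
def IsCoasphericalFunctor (W : FunctorClass.{u}) {A B : Type u} [SmallCategory A]
    [SmallCategory B] (F : A ⥤ B) : Prop :=
  ∀ b : B, IsAsphericalCat W (StructuredArrow b F)

/-- For `F : A ⥤ B` and `b : B`, the induced functor `A/b ⥤ B/b`. -/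
def sliceInduced {A B : Type u} [SmallCategory A] [SmallCategory B] (F : A ⥤ B) (b : B) :
    CostructuredArrow F b ⥤ Over b where
  obj x := Over.mk x.hom
  map {x y} f := Over.homMk (F.map f.left) (by simp [CostructuredArrow.w f])

/-- For a strictly commutative triangle given by `F : A ⥤ B`, `G : B ⥤ C` and `c : C`,
the induced functor `A/c ⥤ B/c`. -/
def triangleSlice {A B C : Type u} [SmallCategory A] [SmallCategory B] [SmallCategory C]
    (F : A ⥤ B) (G : B ⥤ C) (c : C) :
    CostructuredArrow (F ⋙ G) c ⥤ CostructuredArrow G c where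
  obj x := CostructuredArrow.mk (Y := F.obj x.left) x.hom
  map {x y} f := CostructuredArrow.homMk (F.map f.left) (CostructuredArrow.w f)

/-- For a strictly commutative triangle given by `F : A ⥤ B`, `G : B ⥤ C` and `c : C`,
the induced functor `c\A ⥤ c\B`. -/
def triangleCoslice {A B C : Type u} [SmallCategory A] [SmallCategory B] [SmallCategory C]
    (F : A ⥤ B) (G : B ⥤ C) (c : C) :
    StructuredArrow c (F ⋙ G) ⥤ StructuredArrow c G where
  obj x := StructuredArrow.mk (Y := F.obj x.right) x.hom
  map {x y} f := StructuredArrow.homMk (F.map f.right) (StructuredArrow.w f)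


/-- `W` is a weak fundamental localizer. -/
structure IsWeakFundamentalLocalizer (W : FunctorClass.{u}) : Prop where
  id_mem : ∀ (A : Type u) [SmallCategory A], W (𝟭 A)
  comp_mem : ∀ {A B C : Type u} [SmallCategory A] [SmallCategory B] [SmallCategory C]
      (F : A ⥤ B) (G : B ⥤ C), W F → W G → W (F ⋙ G)
  of_comp_left : ∀ {A B C : Type u} [SmallCategory A] [SmallCategory B] [SmallCategory C]
      (F : A ⥤ B) (G : B ⥤ C), W F → W (F ⋙ G) → W G
  of_comp_right : ∀ {A B C : Type u} [SmallCategory A] [SmallCategory B] [SmallCategory C]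
      (F : A ⥤ B) (G : B ⥤ C), W G → W (F ⋙ G) → W F
  retract_mem : ∀ {A A' : Type u} [SmallCategory A] [SmallCategory A']
      (i : A' ⥤ A) (r : A ⥤ A'), i ⋙ r = 𝟭 A' → W (r ⋙ i) → W r
  star_mem : ∀ (A : Type u) [SmallCategory A], Limits.HasTerminal A → W (Functor.star A)
  mem_of_slices : ∀ {A B : Type u} [SmallCategory A] [SmallCategory B] (F : A ⥤ B),
      (∀ b : B, W (sliceInduced F b)) → W F

/-- `W` is a fundamental localizer. -/
structure IsFundamentalLocalizer (W : FunctorClass.{u}) : Prop where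
  id_mem : ∀ (A : Type u) [SmallCategory A], W (𝟭 A)
  comp_mem : ∀ {A B C : Type u} [SmallCategory A] [SmallCategory B] [SmallCategory C]
      (F : A ⥤ B) (G : B ⥤ C), W F → W G → W (F ⋙ G)
  of_comp_left : ∀ {A B C : Type u} [SmallCategory A] [SmallCategory B] [SmallCategory C]
      (F : A ⥤ B) (G : B ⥤ C), W F → W (F ⋙ G) → W G
  of_comp_right : ∀ {A B C : Type u} [SmallCategory A] [SmallCategory B] [SmallCategory C]
      (F : A ⥤ B) (G : B ⥤ C), W G → W (F ⋙ G) → W F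
  retract_mem : ∀ {A A' : Type u} [SmallCategory A] [SmallCategory A']
      (i : A' ⥤ A) (r : A ⥤ A'), i ⋙ r = 𝟭 A' → W (r ⋙ i) → W r
  star_mem : ∀ (A : Type u) [SmallCategory A], Limits.HasTerminal A → W (Functor.star A)
  mem_of_rel_slices : ∀ {A B C : Type u} [SmallCategory A] [SmallCategory B] [SmallCategory C]
      (F : A ⥤ B) (G : B ⥤ C), (∀ c : C, W (triangleSlice F G c)) → W F


section Squares

variable {A A' B B' : Type u} [SmallCategory A] [SmallCategory A']
  [SmallCategory B] [SmallCategory B']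

/-- The functor `A'/b' ⥤ A/w(b')` induced by a square `(u, u', v, w, α)`. -/
def squareSlice (u : A ⥤ B) (u' : A' ⥤ B') (v : A' ⥤ A) (w : B' ⥤ B)
    (α : v ⋙ u ⟶ u' ⋙ w) (b' : B') :
    CostructuredArrow u' b' ⥤ CostructuredArrow u (w.obj b') where
  obj x := CostructuredArrow.mk (Y := v.obj x.left) (α.app x.left ≫ w.map x.hom)
  map {x y} f := CostructuredArrow.homMk (v.map f.left) (by
    have h := α.naturality f.left
    dsimp at h ⊢
    rw [← Category.assoc, h, Category.assoc, ← Functor.map_comp, CostructuredArrow.w f])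

/-- The functor `a\A' ⥤ u(a)\B'` induced by a square `(u, u', v, w, α)`. -/
def squareCoslice (u : A ⥤ B) (u' : A' ⥤ B') (v : A' ⥤ A) (w : B' ⥤ B)
    (α : v ⋙ u ⟶ u' ⋙ w) (a : A) :
    StructuredArrow a v ⥤ StructuredArrow (u.obj a) w where
  obj x := StructuredArrow.mk (Y := u'.obj x.right) (u.map x.hom ≫ α.app x.right)
  map {x y} f := StructuredArrow.homMk (u'.map f.right) (by
    have h := α.naturality f.right
    dsimp at h ⊢
    rw [Category.assoc, ← h, ← Category.assoc, ← Functor.map_comp, StructuredArrow.w f])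

/-- The category `A'_{(a, b', g)}` attached to a square `(u, u', v, w, α)` and a triple
`(a, b', g : u(a) ⟶ w(b'))`. -/
structure SquareFiber (u : A ⥤ B) (u' : A' ⥤ B') (v : A' ⥤ A) (w : B' ⥤ B)
    (α : v ⋙ u ⟶ u' ⋙ w) (a : A) (b' : B') (g : u.obj a ⟶ w.obj b') : Type u where
  pt : A'
  f : a ⟶ v.obj pt
  g' : u'.obj pt ⟶ b'
  fac : u.map f ≫ α.app pt ≫ w.map g' = g

instance (u : A ⥤ B) (u' : A' ⥤ B') (v : A' ⥤ A) (w : B' ⥤ B)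
    (α : v ⋙ u ⟶ u' ⋙ w) (a : A) (b' : B') (g : u.obj a ⟶ w.obj b') :
    Category (SquareFiber u u' v w α a b' g) where
  Hom x y := { h : x.pt ⟶ y.pt // x.f ≫ v.map h = y.f ∧ u'.map h ≫ y.g' = x.g' }
  id x := ⟨𝟙 x.pt, by simp, by simp⟩
  comp {x y z} f g := ⟨f.1 ≫ g.1, by
      rw [Functor.map_comp, ← Category.assoc, f.2.1, g.2.1], by
      rw [Functor.map_comp, Category.assoc, g.2.2, f.2.2]⟩
  id_comp f := by apply Subtype.ext; simp
  comp_id f := by apply Subtype.ext; simp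
  assoc f g h := by apply Subtype.ext; simp

/-- A square `(u, u', v, w, α)` is `W`-exact. -/
def IsExactSquare (W : FunctorClass.{u}) (u : A ⥤ B) (u' : A' ⥤ B') (v : A' ⥤ A)
    (w : B' ⥤ B) (α : v ⋙ u ⟶ u' ⋙ w) : Prop :=
  ∀ b' : B', IsCoasphericalFunctor W (squareSlice u u' v w α b')

/-- The 2-cell of the opposite square. -/
def squareOpCell (u : A ⥤ B) (u' : A' ⥤ B') (v : A' ⥤ A) (w : B' ⥤ B)
    (α : v ⋙ u ⟶ u' ⋙ w) : u'.op ⋙ w.op ⟶ v.op ⋙ u.op :=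
  NatTrans.op α

end Squares

section Comps

/-- The 2-cell of the horizontal composite of two squares. -/
def hcomp2cell {A A' A'' B B' B'' : Type u}
    [SmallCategory A] [SmallCategory A'] [SmallCategory A'']
    [SmallCategory B] [SmallCategory B'] [SmallCategory B'']
    {u : A ⥤ B} {u' : A' ⥤ B'} {u'' : A'' ⥤ B''}
    {v : A' ⥤ A} {w : B' ⥤ B} {v' : A'' ⥤ A'} {w' : B'' ⥤ B'}
    (α : v ⋙ u ⟶ u' ⋙ w) (α' : v' ⋙ u' ⟶ u'' ⋙ w') :
    (v' ⋙ v) ⋙ u ⟶ u'' ⋙ (w' ⋙ w) :=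
  Functor.whiskerLeft v' α ≫ Functor.whiskerRight α' w

/-- The 2-cell of the vertical composite of two squares. -/
def vcomp2cell {A A' B B' C C' : Type u}
    [SmallCategory A] [SmallCategory A'] [SmallCategory B] [SmallCategory B']
    [SmallCategory C] [SmallCategory C']
    {u : A ⥤ B} {u' : A' ⥤ B'} {v : A' ⥤ A} {w : B' ⥤ B}
    {x : B ⥤ C} {x' : B' ⥤ C'} {y : C' ⥤ C}
    (α : v ⋙ u ⟶ u' ⋙ w) (β : w ⋙ x ⟶ x' ⋙ y) :
    v ⋙ (u ⋙ x) ⟶ (u' ⋙ x') ⋙ y :=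
  Functor.whiskerRight α x ≫ Functor.whiskerLeft u' β

end Comps

section Fibers

variable {A B : Type u} [SmallCategory A] [SmallCategory B]

/-- The fiber `A_b` of `F : A ⥤ B` at `b : B`. -/
structure CatFiber (F : A ⥤ B) (b : B) : Type u where
  obj : A
  eq : F.obj obj = b

instance (F : A ⥤ B) (b : B) : Category (CatFiber F b) where
  Hom x y := { f : x.obj ⟶ y.obj // F.map f = eqToHom (x.eq.trans y.eq.symm) }
  id x := ⟨𝟙 x.obj, by simp⟩
  comp {x y z} f g := ⟨f.1 ≫ g.1, by rw [Functor.map_comp, f.2, g.2, eqToHom_trans]⟩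
  id_comp f := by apply Subtype.ext; simp
  comp_id f := by apply Subtype.ext; simp
  assoc f g h := by apply Subtype.ext; simp

/-- The canonical functor `A_b ⥤ A/b`. -/
def fiberToSlice (F : A ⥤ B) (b : B) : CatFiber F b ⥤ CostructuredArrow F b where
  obj x := CostructuredArrow.mk (Y := x.obj) (eqToHom x.eq)
  map {x y} f := CostructuredArrow.homMk f.1 (by simp [f.2])

/-- The canonical functor `A_b ⥤ b\A`. -/
def fiberToCoslice (F : A ⥤ B) (b : B) : CatFiber F b ⥤ StructuredArrow b F where
  obj x := StructuredArrow.mk (Y := x.obj) (eqToHom x.eq.symm)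
  map {x y} f := StructuredArrow.homMk f.1 (by simp [f.2])

/-- The functor `F` is `W`-proper. -/
def IsProper (W : FunctorClass.{u}) (F : A ⥤ B) : Prop :=
  ∀ b : B, IsCoasphericalFunctor W (fiberToSlice F b)

/-- The functor `F` is `W`-smooth. -/
def IsSmooth (W : FunctorClass.{u}) (F : A ⥤ B) : Prop :=
  ∀ b : B, IsAsphericalFunctor W (fiberToCoslice F b)

/-- The functor `F` is a precofibration: each canonical functor `A_b ⥤ A/b` admits a left
adjoint. -/
def IsPrecofibration (F : A ⥤ B) : Prop :=
  ∀ b : B, (fiberToSlice F b).IsRightAdjoint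

end Fibers

/-- `F` is an isomorphism of categories. -/
def IsCatIso {A B : Type u} [SmallCategory A] [SmallCategory B] (F : A ⥤ B) : Prop :=
  ∃ G : B ⥤ A, F ⋙ G = 𝟭 A ∧ G ⋙ F = 𝟭 B

section Pullback

variable {A B B' : Type u} [SmallCategory A] [SmallCategory B] [SmallCategory B']

/-- The strict pullback `B' ×_B A` of `u : A ⥤ B` and `w : B' ⥤ B`. -/
structure CatPullback (u : A ⥤ B) (w : B' ⥤ B) : Type u where
  fst : B'
  snd : A
  eq : w.obj fst = u.obj snd

instance (u : A ⥤ B) (w : B' ⥤ B) : Category (CatPullback u w) where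
  Hom x y := { p : (x.fst ⟶ y.fst) × (x.snd ⟶ y.snd) //
    w.map p.1 ≫ eqToHom y.eq = eqToHom x.eq ≫ u.map p.2 }
  id x := ⟨(𝟙 x.fst, 𝟙 x.snd), by simp⟩
  comp {x y z} f g := ⟨(f.1.1 ≫ g.1.1, f.1.2 ≫ g.1.2), by
    rw [Functor.map_comp, Functor.map_comp, Category.assoc, g.2, ← Category.assoc, f.2,
      Category.assoc]⟩
  id_comp f := by apply Subtype.ext; simp
  comp_id f := by apply Subtype.ext; simp
  assoc f g h := by apply Subtype.ext; simp

/-- First projection of the strict pullback. -/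
def pbFst (u : A ⥤ B) (w : B' ⥤ B) : CatPullback u w ⥤ B' where
  obj x := x.fst
  map f := f.1.1

/-- Second projection of the strict pullback. -/
def pbSnd (u : A ⥤ B) (w : B' ⥤ B) : CatPullback u w ⥤ A where
  obj x := x.snd
  map f := f.1.2

theorem pb_comm (u : A ⥤ B) (w : B' ⥤ B) : pbSnd u w ⋙ u = pbFst u w ⋙ w := by
  have hobj : ∀ x : CatPullback u w, (pbSnd u w ⋙ u).obj x = (pbFst u w ⋙ w).obj x :=
    fun x => x.eq.symm
  refine CategoryTheory.Functor.ext hobj (fun x y f => ?_)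
  have h := f.2
  dsimp only [Functor.comp_map, pbFst, pbSnd]
  rw [h]
  erw [eqToHom_trans_assoc, eqToHom_refl, Category.id_comp]

/-- The comparison functor from the top-left corner of a commutative square to the
strict pullback. -/
def toPullback {A' : Type u} [SmallCategory A'] (u : A ⥤ B) (u' : A' ⥤ B') (v : A' ⥤ A)
    (w : B' ⥤ B) (h : v ⋙ u = u' ⋙ w) : A' ⥤ CatPullback u w where
  obj a' := ⟨u'.obj a', v.obj a', (Functor.congr_obj h a').symm⟩
  map {x y} f := ⟨(u'.map f, v.map f), by
    have := Functor.congr_hom h f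
    dsimp at this
    rw [this]
    simp⟩
  map_id x := by
    apply Subtype.ext
    show (u'.map (𝟙 x), v.map (𝟙 x)) = (𝟙 _, 𝟙 _)
    simp
  map_comp f g := by
    apply Subtype.ext
    show (u'.map _, v.map _) = (u'.map _ ≫ u'.map _, v.map _ ≫ v.map _)
    simp

end Pullback

section BaseChange

variable {A A' B B' : Type u} [SmallCategory A] [SmallCategory A']
  [SmallCategory B] [SmallCategory B']

/-- The base-change morphism `v ∘ r' ⟶ r ∘ w` associated with a square whose vertical
edges admit right adjoints. -/
def baseChangeR {u : A ⥤ B} {u' : A' ⥤ B'} {v : A' ⥤ A} {w : B' ⥤ B}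
    {r : B ⥤ A} {r' : B' ⥤ A'} (adj : u ⊣ r) (adj' : u' ⊣ r')
    (α : v ⋙ u ⟶ u' ⋙ w) : r' ⋙ v ⟶ w ⋙ r :=
  Functor.whiskerLeft (r' ⋙ v) adj.unit ≫ Functor.whiskerLeft r' (Functor.whiskerRight α r) ≫
    Functor.whiskerRight adj'.counit (w ⋙ r)

/-- The base-change morphism `w'' ∘ u ⟶ u' ∘ v''` associated with a square whose horizontal
edges admit left adjoints. -/
def baseChangeL {u : A ⥤ B} {u' : A' ⥤ B'} {v : A' ⥤ A} {w : B' ⥤ B}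
    {v'' : A ⥤ A'} {w'' : B ⥤ B'} (adjv : v'' ⊣ v) (adjw : w'' ⊣ w)
    (α : v ⋙ u ⟶ u' ⋙ w) : u ⋙ w'' ⟶ v'' ⋙ u' :=
  Functor.whiskerRight adjv.unit (u ⋙ w'') ≫ Functor.whiskerLeft v'' (Functor.whiskerRight α w'') ≫
    Functor.whiskerLeft (v'' ⋙ u') adjw.counit

end BaseChange

section LocColoc

variable {X Y C : Type u} [SmallCategory X] [SmallCategory Y] [SmallCategory C]

/-- `F : X ⥤ Y`, viewed over `C` via `P : Y ⥤ C` (and `F ⋙ P` on `X`), is a `W`-equivalence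
locally on `C`. -/
def IsLocallyEquiv (W : FunctorClass.{u}) (F : X ⥤ Y) (P : Y ⥤ C) : Prop :=
  ∀ c : C, W (triangleSlice F P c)

/-- `F : X ⥤ Y`, viewed over `C` via `P : Y ⥤ C` (and `F ⋙ P` on `X`), is a `W`-equivalence
colocally on `C`. -/
def IsColocallyEquiv (W : FunctorClass.{u}) (F : X ⥤ Y) (P : Y ⥤ C) : Prop :=
  ∀ c : C, W (triangleCoslice F P c)

end LocColoc

/-- A square `(u, u', v, w, α)` is weakly `W`-exact. -/
def IsWeakExactSquare (W : FunctorClass.{u}) {A A' B B' : Type u} [SmallCategory A]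
    [SmallCategory A'] [SmallCategory B] [SmallCategory B'] (u : A ⥤ B) (u' : A' ⥤ B')
    (v : A' ⥤ A) (w : B' ⥤ B) (α : v ⋙ u ⟶ u' ⋙ w) : Prop :=
  ∀ b' : B', IsColocallyEquiv W (squareSlice u u' v w α b') (CostructuredArrow.proj u (w.obj b'))

/-- `w : B' ⥤ B` is a discrete fibration. -/
def IsDiscreteFibration {B' B : Type u} [SmallCategory B'] [SmallCategory B]
    (w : B' ⥤ B) : Prop :=
  ∀ (b' : B') (b : B) (g : b ⟶ w.obj b'),
    ∃! p : Σ b₀ : B', b₀ ⟶ b', ∃ h : w.obj p.1 = b, w.map p.2 = eqToHom h ≫ g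

/-- The coarse fundamental localizer: functors whose source and target are both empty or
both nonempty. -/
def coarseLocalizer : FunctorClass.{u} :=
  @fun A B _ _ _ => Nonempty A ↔ Nonempty B

/-- The map induced on sets of connected components. -/
def π₀map {A B : Type u} [SmallCategory A] [SmallCategory B] (F : A ⥤ B) :
    ConnectedComponents A → ConnectedComponents B :=
  F.mapConnectedComponents

/-- The fundamental localizer `W₀` of `0`-equivalences: functors inducing a bijection on
connected components. -/
def W₀ : FunctorClass.{u} :=
  @fun _ _ _ _ F => Function.Bijective (π₀map F)

/-- A square in `Cat`: four small categories, four functors and a `2`-cell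
`α : u ∘ v ⟶ w ∘ u'`. -/
structure CatSquare : Type (u + 1) where
  {A' : Type u}
  {A : Type u}
  {B' : Type u}
  {B : Type u}
  [instA' : SmallCategory A']
  [instA : SmallCategory A]
  [instB' : SmallCategory B']
  [instB : SmallCategory B]
  u : A ⥤ B
  u' : A' ⥤ B'
  v : A' ⥤ A
  w : B' ⥤ B
  α : v ⋙ u ⟶ u' ⋙ w

attribute [instance] CatSquare.instA' CatSquare.instA CatSquare.instB' CatSquare.instB

/-- A bundled square is `W`-exact. -/
def CatSquare.IsExact (W : FunctorClass.{u}) (S : CatSquare.{u}) : Prop :=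
  IsExactSquare W S.u S.u' S.v S.w S.α

/-- The opposite of a square. -/
def CatSquare.op (S : CatSquare.{u}) : CatSquare.{u} :=
  ⟨S.w.op, S.v.op, S.u'.op, S.u.op, squareOpCell S.u S.u' S.v S.w S.α⟩

/-- The comma square associated with `u : A ⥤ B` and `w : B' ⥤ B`. -/
def commaSquare {A B B' : Type u} [SmallCategory A] [SmallCategory B] [SmallCategory B']
    (u : A ⥤ B) (w : B' ⥤ B) : CatSquare.{u} :=
  ⟨u, Comma.snd u w, Comma.fst u w, w, Comma.natTrans u w⟩

/-- The comma square `D^g_{u, b}` of `u : A ⥤ B` at an object `b : B`. -/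
def commaObjSquare {A B : Type u} [SmallCategory A] [SmallCategory B] (u : A ⥤ B) (b : B) :
    CatSquare.{u} :=
  commaSquare u (Functor.fromPUnit.{u} b)

/-- The dual comma square `D^d_{v, a}` of `v : A' ⥤ A` at an object `a : A`. -/
def commaObjSquareD {A' A : Type u} [SmallCategory A'] [SmallCategory A] (v : A' ⥤ A)
    (a : A) : CatSquare.{u} :=
  commaSquare (Functor.fromPUnit.{u} a) v

/-- The square with top edge `F : A ⥤ B`, the canonical functors `A ⥤ e`, `B ⥤ e` as
vertical edges, identity bottom edge and identity `2`-cell. -/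
def starSquare {A B : Type u} [SmallCategory A] [SmallCategory B] (F : A ⥤ B) :
    CatSquare.{u} :=
  ⟨Functor.star B, Functor.star A, F, 𝟭 (PtCat.{u}), 𝟙 (F ⋙ Functor.star B)⟩

/-- The square with all four corners of the form `(A, e, e, e)`, canonical edges and
identity `2`-cell. -/
def ptSquare (A : Type u) [SmallCategory A] : CatSquare.{u} :=
  ⟨𝟭 (PtCat.{u}), Functor.star A, Functor.star A, 𝟭 (PtCat.{u}), 𝟙 (Functor.star A)⟩

/-- `Q` is stable under horizontal composition of squares (condition CS1h). -/
def StableHComp (Q : CatSquare.{u} → Prop) : Prop :=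
  ∀ {A A' A'' B B' B'' : Type u}
    [SmallCategory A] [SmallCategory A'] [SmallCategory A'']
    [SmallCategory B] [SmallCategory B'] [SmallCategory B'']
    (u : A ⥤ B) (u' : A' ⥤ B') (u'' : A'' ⥤ B'')
    (v : A' ⥤ A) (w : B' ⥤ B) (v' : A'' ⥤ A') (w' : B'' ⥤ B')
    (α : v ⋙ u ⟶ u' ⋙ w) (α' : v' ⋙ u' ⟶ u'' ⋙ w'),
    Q ⟨u, u', v, w, α⟩ → Q ⟨u', u'', v', w', α'⟩ →
    Q ⟨u, u'', v' ⋙ v, w' ⋙ w, hcomp2cell α α'⟩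

/-- `Q` is stable under vertical composition of squares (condition CS1v). -/
def StableVComp (Q : CatSquare.{u} → Prop) : Prop :=
  ∀ {A A' B B' C C' : Type u}
    [SmallCategory A] [SmallCategory A'] [SmallCategory B] [SmallCategory B']
    [SmallCategory C] [SmallCategory C']
    (u : A ⥤ B) (u' : A' ⥤ B') (v : A' ⥤ A) (w : B' ⥤ B)
    (x : B ⥤ C) (x' : B' ⥤ C') (y : C' ⥤ C)
    (α : v ⋙ u ⟶ u' ⋙ w) (β : w ⋙ x ⟶ x' ⋙ y),
    Q ⟨u, u', v, w, α⟩ → Q ⟨x, x', w, y, β⟩ →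
    Q ⟨u ⋙ x, u' ⋙ x', v, y, vcomp2cell α β⟩

/-- `Q` satisfies horizontal descent (condition CS2h). -/
def HorizontalDescent (Q : CatSquare.{u} → Prop) : Prop :=
  ∀ {A A' B B' : Type u}
    [SmallCategory A] [SmallCategory A'] [SmallCategory B] [SmallCategory B']
    (u : A ⥤ B) (u' : A' ⥤ B') (v : A' ⥤ A) (w : B' ⥤ B) (α : v ⋙ u ⟶ u' ⋙ w)
    (J : Type u) (Aj Bj : J → Type u)
    [∀ j, SmallCategory (Aj j)] [∀ j, SmallCategory (Bj j)]
    (uj : ∀ j, Aj j ⥤ Bj j) (vj : ∀ j, Aj j ⥤ A') (wj : ∀ j, Bj j ⥤ B')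
    (αj : ∀ j, vj j ⋙ u' ⟶ uj j ⋙ wj j),
    (∀ b' : B', ∃ j, ∃ b : Bj j, (wj j).obj b = b') →
    (∀ j, Q ⟨u', uj j, vj j, wj j, αj j⟩) →
    (∀ j, Q ⟨u, uj j, vj j ⋙ v, wj j ⋙ w, hcomp2cell α (αj j)⟩) →
    Q ⟨u, u', v, w, α⟩

/-- `Q` satisfies local descent (condition CS3h). -/
def LocalDescent (Q : CatSquare.{u} → Prop) : Prop :=
  ∀ {A A' B B' : Type u}
    [SmallCategory A] [SmallCategory A'] [SmallCategory B] [SmallCategory B']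
    (u : A ⥤ B) (u' : A' ⥤ B') (v : A' ⥤ A) (w : B' ⥤ B) (α : v ⋙ u ⟶ u' ⋙ w),
    (∀ b' : B', Q ⟨u, Comma.snd u' (Functor.fromPUnit.{u} b'),
        Comma.fst u' (Functor.fromPUnit.{u} b') ⋙ v, Functor.fromPUnit.{u} b' ⋙ w,
        hcomp2cell α (Comma.natTrans u' (Functor.fromPUnit.{u} b'))⟩) →
    Q ⟨u, u', v, w, α⟩

/-- `Q` satisfies colocal descent (condition CS3v). -/
def ColocalDescent (Q : CatSquare.{u} → Prop) : Prop :=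
  ∀ {A A' B B' : Type u}
    [SmallCategory A] [SmallCategory A'] [SmallCategory B] [SmallCategory B']
    (u : A ⥤ B) (u' : A' ⥤ B') (v : A' ⥤ A) (w : B' ⥤ B) (α : v ⋙ u ⟶ u' ⋙ w),
    (∀ a : A, Q ⟨Functor.fromPUnit.{u} a ⋙ u,
        Comma.snd (Functor.fromPUnit.{u} a) v ⋙ u',
        Comma.fst (Functor.fromPUnit.{u} a) v, w,
        vcomp2cell (Comma.natTrans (Functor.fromPUnit.{u} a) v) α⟩) →
    Q ⟨u, u', v, w, α⟩

/-- `Q` is stable under passing to opposite squares (condition CS4). -/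
def OpStable (Q : CatSquare.{u} → Prop) : Prop :=
  ∀ S : CatSquare.{u}, Q S → Q S.op

/-- Isomorphism of squares. -/
def CatSquare.Isomorphic (S T : CatSquare.{u}) : Prop :=
  ∃ (eA' : S.A' ⥤ T.A') (eA : S.A ⥤ T.A) (eB' : S.B' ⥤ T.B') (eB : S.B ⥤ T.B)
    (_ : IsCatIso eA') (_ : IsCatIso eA) (_ : IsCatIso eB') (_ : IsCatIso eB)
    (hv : S.v ⋙ eA = eA' ⋙ T.v) (hu : S.u ⋙ eB = eA ⋙ T.u)
    (hu' : S.u' ⋙ eB' = eA' ⋙ T.u') (hw : S.w ⋙ eB = eB' ⋙ T.w),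
    Functor.whiskerRight S.α eB =
      eqToHom (by rw [Functor.assoc, hu, ← Functor.assoc, hv, Functor.assoc]) ≫
        Functor.whiskerLeft eA' T.α ≫
        eqToHom (by rw [← Functor.assoc, ← hu', Functor.assoc, ← hw, ← Functor.assoc])

/-- A bundled square is a right Beck–Chevalley square. -/
def CatSquare.IsRightBC (S : CatSquare.{u}) : Prop :=
  ∃ (v'' : S.A ⥤ S.A') (w'' : S.B ⥤ S.B') (adjv : v'' ⊣ S.v) (adjw : w'' ⊣ S.w),
    IsIso (baseChangeL adjv adjw S.α)

/-- The functor `A/b ⥤ B/b` induced by `u : A ⥤ B`, in terms of comma categories. -/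
def commaSliceInduced {A B : Type u} [SmallCategory A] [SmallCategory B] (u : A ⥤ B)
    (b : B) : Comma u (Functor.fromPUnit.{u} b) ⥤ Comma (𝟭 B) (Functor.fromPUnit.{u} b) where
  obj x := { left := u.obj x.left, right := x.right, hom := x.hom }
  map {x y} f := { left := u.map f.left, right := f.right, w := by simp [f.w] }

/-- The cartesian square expressing `A/b` as the pullback of `u : A ⥤ B` along the
forgetful functor `B/b ⥤ B`. -/
def sliceCartSquare {A B : Type u} [SmallCategory A] [SmallCategory B] (u : A ⥤ B)
    (b : B) : CatSquare.{u} :=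
  ⟨u, commaSliceInduced u b, Comma.fst u (Functor.fromPUnit.{u} b),
    Comma.fst (𝟭 B) (Functor.fromPUnit.{u} b),
    𝟙 (Comma.fst u (Functor.fromPUnit.{u} b) ⋙ u)⟩



/-!
For `g : u a ⟶ w b'`, the category of objects of `A'/b'` under `(a, g)` for `squareSlice` is
isomorphic to `SquareFiber u u' v w α a b' g`, the category of factorisations
`u a ⟶ u (v a') ⟶ w (u' a') ⟶ w b'` of `g` through `α`; for the opposite square the corresponding
category is the opposite of the same `SquareFiber`. So it suffices that a category is aspherical
iff its opposite is.

The twisted arrow category `Tw A` projects to `A` with contractible slices, and its projection to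
`Aᵒᵖ` is the first projection for `Aᵒᵖ` under `Tw A ≅ Tw Aᵒᵖ`. Both projections thus lie in `W`,
so `A`, `Tw A` and `Aᵒᵖ` are aspherical together. Contractible categories are aspherical because
`W` is homotopy invariant: a natural transformation `F ⟶ G` is a functor on the cylinder
`[1] × A`, whose projection to `A` has slices with terminal objects; its two sections are then in
`W`, and they restrict the cylinder functor to `F` and `G`.
-/

namespace IsWeakFundamentalLocalizer

variable {W : FunctorClass.{u}}

lemma comp_mem_iff (hW : IsWeakFundamentalLocalizer W) {A B C : Type u} [SmallCategory A]
    [SmallCategory B] [SmallCategory C] {F : A ⥤ B} (G : B ⥤ C) (hF : W F) : W (F ⋙ G) ↔ W G :=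
  ⟨hW.of_comp_left F G hF, hW.comp_mem F G hF⟩

lemma mem_of_isCatIso (hW : IsWeakFundamentalLocalizer W) {C D : Type u} [SmallCategory C]
    [SmallCategory D] {F : C ⥤ D} (hF : IsCatIso F) : W F := by
  obtain ⟨G, hFG, hGF⟩ := hF
  exact hW.retract_mem G F hGF (hFG ▸ hW.id_mem C)

lemma isAsphericalCat_iff_of_isCatIso (hW : IsWeakFundamentalLocalizer W) {C D : Type u}
    [SmallCategory C] [SmallCategory D] {F : C ⥤ D} (hF : IsCatIso F) :
    IsAsphericalCat W C ↔ IsAsphericalCat W D := by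
  rw [IsAsphericalCat, IsAsphericalCat,
    ← Functor.punit_ext' (F ⋙ Functor.star D) (Functor.star C)]
  exact hW.comp_mem_iff _ (hW.mem_of_isCatIso hF)

lemma mem_of_isAsphericalFunctor (hW : IsWeakFundamentalLocalizer W) {A B : Type u}
    [SmallCategory A] [SmallCategory B] {F : A ⥤ B} (hF : IsAsphericalFunctor W F) : W F := by
  refine hW.mem_of_slices F fun b => hW.of_comp_right _ (Functor.star (Over b))
    (hW.star_mem _ Over.mkIdTerminal.hasTerminal) ?_
  rw [Functor.punit_ext' (sliceInduced F b ⋙ Functor.star (Over b))]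
  exact hF b

lemma snd_mem_of_isTerminal (hW : IsWeakFundamentalLocalizer W) {I : Type u} [SmallCategory I]
    {t : I} (ht : Limits.IsTerminal t) (A : Type u) [SmallCategory A] :
    W (CategoryTheory.Prod.snd I A) :=
  hW.mem_of_isAsphericalFunctor fun a => hW.star_mem _
    (Limits.IsTerminal.ofUniqueHom (Y := CostructuredArrow.mk
        (show (CategoryTheory.Prod.snd I A).obj (t, a) ⟶ a from 𝟙 a))
      (fun x => CostructuredArrow.homMk (ht.from x.left.1, x.hom) (by simp))
      (fun x m => by
        ext
        · exact ht.hom_ext _ _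
        · simpa using CostructuredArrow.w m)).hasTerminal

end IsWeakFundamentalLocalizer

lemma sectR_comp_uncurry_obj {I C D : Type*} [Category I] [Category C] [Category D]
    (K : I ⥤ C ⥤ D) (i : I) : Prod.sectR i C ⋙ Functor.uncurry.obj K = K.obj i :=
  CategoryTheory.Functor.ext (fun _ => rfl) fun c c' f => by
    change (K.map (𝟙 i)).app c ≫ (K.obj i).map f = 𝟙 _ ≫ (K.obj i).map f ≫ 𝟙 _
    simp

abbrev IntervalCat : Type u := ULift.{u} (Fin 2)

def natTransCylinder {A B : Type u} [SmallCategory A] [SmallCategory B] {F G : A ⥤ B}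
    (α : F ⟶ G) : IntervalCat.{u} × A ⥤ B :=
  Functor.uncurry.obj
    ((Monotone.functor (f := ULift.down) fun _ _ h => h) ⋙ ComposableArrows.mk₁ α)

namespace IsWeakFundamentalLocalizer

variable {W : FunctorClass.{u}}

lemma mem_iff_of_natTrans (hW : IsWeakFundamentalLocalizer W) {A B : Type u}
    [SmallCategory A] [SmallCategory B] {F G : A ⥤ B} (α : F ⟶ G) : W F ↔ W G := by
  have hsect (i : IntervalCat.{u}) : W (Prod.sectR i A) :=
    hW.of_comp_right _ _ (hW.snd_mem_of_isTerminal Limits.isTerminalTop A) (hW.id_mem A)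
  have hF : Prod.sectR ⊥ A ⋙ natTransCylinder α = F := sectR_comp_uncurry_obj _ _
  have hG : Prod.sectR ⊤ A ⋙ natTransCylinder α = G := sectR_comp_uncurry_obj _ _
  have h := (hW.comp_mem_iff (natTransCylinder α) (hsect ⊥)).trans
    (hW.comp_mem_iff (natTransCylinder α) (hsect ⊤)).symm
  rwa [hF, hG] at h

lemma isAsphericalCat_of_contraction (hW : IsWeakFundamentalLocalizer W) {C : Type u}
    [SmallCategory C] (c₀ : C) {D : C ⥤ C} (ε : 𝟭 C ⟶ D)
    (η : Functor.star C ⋙ Functor.fromPUnit.{u} c₀ ⟶ D) : IsAsphericalCat W C := by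
  have hD : W D := (hW.mem_iff_of_natTrans ε).mp (hW.id_mem C)
  exact hW.retract_mem (Functor.fromPUnit.{u} c₀) (Functor.star C) (Functor.punit_ext' _ _)
    ((hW.mem_iff_of_natTrans η).mpr hD)

end IsWeakFundamentalLocalizer

structure TwistedArrow (A : Type u) [SmallCategory A] : Type u where
  src : A
  tgt : A
  arr : src ⟶ tgt

namespace TwistedArrow

variable {A : Type u} [SmallCategory A]

instance : SmallCategory (TwistedArrow A) where
  Hom g h := { pq : (h.src ⟶ g.src) × (g.tgt ⟶ h.tgt) // h.arr = pq.1 ≫ g.arr ≫ pq.2 }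
  id g := ⟨(𝟙 g.src, 𝟙 g.tgt), by simp⟩
  comp m n := ⟨(n.1.1 ≫ m.1.1, m.1.2 ≫ n.1.2), n.2.trans (by simp [m.2])⟩

@[ext]
lemma hom_ext {g h : TwistedArrow A} {m n : g ⟶ h} (h₁ : m.1.1 = n.1.1) (h₂ : m.1.2 = n.1.2) :
    m = n :=
  Subtype.ext (Prod.ext h₁ h₂)

@[simp]
lemma id_val (g : TwistedArrow A) : (𝟙 g : g ⟶ g).1 = (𝟙 g.src, 𝟙 g.tgt) := rfl

@[simp]
lemma comp_val {g h i : TwistedArrow A} (m : g ⟶ h) (n : h ⟶ i) :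
    (m ≫ n).1 = (n.1.1 ≫ m.1.1, m.1.2 ≫ n.1.2) := rfl

variable (A) in
abbrev target : TwistedArrow A ⥤ A where
  obj g := g.tgt
  map m := m.1.2

variable (A) in
abbrev source : TwistedArrow A ⥤ Aᵒᵖ where
  obj g := Opposite.op g.src
  map m := m.1.1.op

def toOp : TwistedArrow A ⥤ TwistedArrow Aᵒᵖ where
  obj g := ⟨Opposite.op g.tgt, Opposite.op g.src, g.arr.op⟩
  map m := ⟨(m.1.2.op, m.1.1.op), by simp [m.2]⟩

def ofOp : TwistedArrow Aᵒᵖ ⥤ TwistedArrow A where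
  obj g := ⟨g.tgt.unop, g.src.unop, g.arr.unop⟩
  map m := ⟨(m.1.2.unop, m.1.1.unop), by simp [m.2]⟩

lemma isCatIso_toOp : IsCatIso (toOp (A := A)) :=
  ⟨ofOp, rfl, rfl⟩

lemma toOp_comp_target : toOp ⋙ target Aᵒᵖ = source A := rfl

variable {a : A}

lemma targetSlice_arr_comp_hom {x y : CostructuredArrow (target A) a} (m : x ⟶ y) :
    y.left.arr ≫ y.hom = m.left.1.1 ≫ x.left.arr ≫ x.hom := by
  have hw : m.left.1.2 ≫ y.hom = x.hom := CostructuredArrow.w m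
  calc y.left.arr ≫ y.hom = (m.left.1.1 ≫ x.left.arr ≫ m.left.1.2) ≫ y.hom :=
        congrArg (· ≫ y.hom) m.left.2
    _ = m.left.1.1 ≫ x.left.arr ≫ x.hom := by simp [hw]

variable (a)

/- `Tw(A)/a` is contractible through `(s ⟶ t ⟶ a) ⟶ (s ⟶ a ⟶ a) ⟵ (a ⟶ a ⟶ a)`. -/
def targetSliceRetraction : CostructuredArrow (target A) a ⥤ CostructuredArrow (target A) a where
  obj x := CostructuredArrow.mk (Y := mk x.left.src a (x.left.arr ≫ x.hom)) (𝟙 a)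
  map m := CostructuredArrow.homMk ⟨(m.left.1.1, 𝟙 a), by simp [targetSlice_arr_comp_hom m]⟩
  map_comp _ _ := by ext <;> simp

def targetSliceCenter : CostructuredArrow (target A) a :=
  CostructuredArrow.mk (Y := mk a a (𝟙 a)) (𝟙 a)

def toTargetSliceRetraction : 𝟭 _ ⟶ targetSliceRetraction a where
  app x := CostructuredArrow.homMk ⟨(𝟙 x.left.src, x.hom), by simp [targetSliceRetraction]⟩
    (by simp [targetSliceRetraction])
  naturality x y m := by
    ext
    · simp [targetSliceRetraction]
    · simpa [targetSliceRetraction] using CostructuredArrow.w m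

def targetSliceCenterToRetraction :
    Functor.star _ ⋙ Functor.fromPUnit.{u} (targetSliceCenter a) ⟶ targetSliceRetraction a where
  app x := CostructuredArrow.homMk
    ⟨(x.left.arr ≫ x.hom, 𝟙 a), by simp [targetSliceCenter, targetSliceRetraction]⟩
    (by simp [targetSliceRetraction, targetSliceCenter])
  naturality x y m := by
    ext
    · simp [targetSliceRetraction]
      exact targetSlice_arr_comp_hom m
    · rfl

end TwistedArrow

namespace IsWeakFundamentalLocalizer

variable {W : FunctorClass.{u}}

lemma target_mem (hW : IsWeakFundamentalLocalizer W) (A : Type u) [SmallCategory A] :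
    W (TwistedArrow.target A) :=
  hW.mem_of_isAsphericalFunctor fun a =>
    hW.isAsphericalCat_of_contraction (TwistedArrow.targetSliceCenter a)
      (TwistedArrow.toTargetSliceRetraction a) (TwistedArrow.targetSliceCenterToRetraction a)

lemma source_mem (hW : IsWeakFundamentalLocalizer W) (A : Type u) [SmallCategory A] :
    W (TwistedArrow.source A) := by
  rw [← TwistedArrow.toOp_comp_target]
  exact hW.comp_mem _ _ (hW.mem_of_isCatIso TwistedArrow.isCatIso_toOp) (hW.target_mem Aᵒᵖ)

lemma isAsphericalCat_op_iff (hW : IsWeakFundamentalLocalizer W) (A : Type u)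
    [SmallCategory A] : IsAsphericalCat W Aᵒᵖ ↔ IsAsphericalCat W A := by
  rw [IsAsphericalCat, IsAsphericalCat, ← hW.comp_mem_iff _ (hW.source_mem A),
    ← hW.comp_mem_iff _ (hW.target_mem A), Functor.punit_ext' (TwistedArrow.source A ⋙ _)]

end IsWeakFundamentalLocalizer

section SquareFiber

variable {A A' B B' : Type u} [SmallCategory A] [SmallCategory A']
  [SmallCategory B] [SmallCategory B']
  (u : A ⥤ B) (u' : A' ⥤ B') (v : A' ⥤ A) (w : B' ⥤ B) (α : v ⋙ u ⟶ u' ⋙ w)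

def structuredArrowSquareSliceToFiber (b' : B') (x : CostructuredArrow u (w.obj b')) :
    StructuredArrow x (squareSlice u u' v w α b') ⥤
      SquareFiber u u' v w α x.left b' x.hom where
  obj z := ⟨z.right.left, z.hom.left, z.right.hom, by
    simpa [squareSlice] using CostructuredArrow.w z.hom⟩
  map m := ⟨m.right.left, by
    simpa [squareSlice] using congrArg CommaMorphism.left (StructuredArrow.w m),
    CostructuredArrow.w m.right⟩

def squareFiberToStructuredArrowSquareSlice (b' : B') (x : CostructuredArrow u (w.obj b')) :
    SquareFiber u u' v w α x.left b' x.hom ⥤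
      StructuredArrow x (squareSlice u u' v w α b') where
  obj s := StructuredArrow.mk (Y := CostructuredArrow.mk (Y := s.pt) s.g')
    (CostructuredArrow.homMk s.f (by simpa [squareSlice] using s.fac))
  map m := StructuredArrow.homMk (CostructuredArrow.homMk m.1 m.2.2) (by
    ext
    exact m.2.1)

lemma isCatIso_structuredArrowSquareSliceToFiber (b' : B')
    (x : CostructuredArrow u (w.obj b')) :
    IsCatIso (structuredArrowSquareSliceToFiber u u' v w α b' x) :=
  ⟨squareFiberToStructuredArrowSquareSlice u u' v w α b' x, rfl, rfl⟩

end SquareFiber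

section SquareFiberOp

variable {A A' B B' : Type u} [SmallCategory A] [SmallCategory A']
  [SmallCategory B] [SmallCategory B']
  (u : A ⥤ B) (u' : A' ⥤ B') (v : A' ⥤ A) (w : B' ⥤ B) (α : v ⋙ u ⟶ u' ⋙ w)

def structuredArrowSquareSliceOpToFiberOp (a : Aᵒᵖ)
    (y : CostructuredArrow w.op (u.op.obj a)) :
    StructuredArrow y (squareSlice w.op v.op u'.op u.op (squareOpCell u u' v w α) a) ⥤
      (SquareFiber u u' v w α a.unop y.left.unop y.hom.unop)ᵒᵖ where
  obj z := Opposite.op ⟨z.right.left.unop, z.right.hom.unop, z.hom.left.unop, by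
    simpa [squareSlice, squareOpCell] using
      congrArg Quiver.Hom.unop (CostructuredArrow.w z.hom)⟩
  map m := Quiver.Hom.op ⟨m.right.left.unop,
    by simpa using congrArg Quiver.Hom.unop (CostructuredArrow.w m.right),
    by simpa [squareSlice, squareOpCell] using
      congrArg (fun f => f.left.unop) (StructuredArrow.w m)⟩

def squareFiberOpToStructuredArrowSquareSliceOp (a : Aᵒᵖ)
    (y : CostructuredArrow w.op (u.op.obj a)) :
    (SquareFiber u u' v w α a.unop y.left.unop y.hom.unop)ᵒᵖ ⥤
      StructuredArrow y (squareSlice w.op v.op u'.op u.op (squareOpCell u u' v w α) a) where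
  obj s := StructuredArrow.mk
    (Y := CostructuredArrow.mk (Y := Opposite.op s.unop.pt) s.unop.f.op)
    (CostructuredArrow.homMk s.unop.g'.op (Quiver.Hom.unop_inj (by
      simpa [squareSlice, squareOpCell] using s.unop.fac)))
  map m := StructuredArrow.homMk
    (CostructuredArrow.homMk m.unop.1.op (Quiver.Hom.unop_inj (by simpa using m.unop.2.1)))
    (by
      ext
      exact Quiver.Hom.unop_inj m.unop.2.2)

lemma isCatIso_structuredArrowSquareSliceOpToFiberOp (a : Aᵒᵖ)
    (y : CostructuredArrow w.op (u.op.obj a)) :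
    IsCatIso (structuredArrowSquareSliceOpToFiberOp u u' v w α a y) :=
  ⟨squareFiberOpToStructuredArrowSquareSliceOp u u' v w α a y, rfl, rfl⟩

end SquareFiberOp

namespace IsWeakFundamentalLocalizer

variable {W : FunctorClass.{u}} {A A' B B' : Type u} [SmallCategory A] [SmallCategory A']
  [SmallCategory B] [SmallCategory B']
  {u : A ⥤ B} {u' : A' ⥤ B'} {v : A' ⥤ A} {w : B' ⥤ B} {α : v ⋙ u ⟶ u' ⋙ w}

lemma isExactSquare_iff_forall_squareFiber (hW : IsWeakFundamentalLocalizer W) :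
    IsExactSquare W u u' v w α ↔
      ∀ a b' (g : u.obj a ⟶ w.obj b'), IsAsphericalCat W (SquareFiber u u' v w α a b' g) := by
  have key (b' : B') (x : CostructuredArrow u (w.obj b')) :
      IsAsphericalCat W (StructuredArrow x (squareSlice u u' v w α b')) ↔
        IsAsphericalCat W (SquareFiber u u' v w α x.left b' x.hom) :=
    hW.isAsphericalCat_iff_of_isCatIso (isCatIso_structuredArrowSquareSliceToFiber ..)
  exact ⟨fun h a b' g => (key b' (.mk g)).mp (h b' _), fun h b' x => (key b' x).mpr (h _ _ _)⟩

lemma isExactSquare_op_iff_forall_squareFiber (hW : IsWeakFundamentalLocalizer W) :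
    IsExactSquare W w.op v.op u'.op u.op (squareOpCell u u' v w α) ↔
      ∀ a b' (g : u.obj a ⟶ w.obj b'), IsAsphericalCat W (SquareFiber u u' v w α a b' g)ᵒᵖ := by
  have key (a : Aᵒᵖ) (y : CostructuredArrow w.op (u.op.obj a)) :
      IsAsphericalCat W
          (StructuredArrow y (squareSlice w.op v.op u'.op u.op (squareOpCell u u' v w α) a)) ↔
        IsAsphericalCat W (SquareFiber u u' v w α a.unop y.left.unop y.hom.unop)ᵒᵖ :=
    hW.isAsphericalCat_iff_of_isCatIso (isCatIso_structuredArrowSquareSliceOpToFiberOp ..)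
  exact ⟨fun h a b' g => (key (.op a) (CostructuredArrow.mk (Y := Opposite.op b') g.op)).mp
    (h _ _), fun h a y => (key a y).mpr (h _ _ _)⟩

end IsWeakFundamentalLocalizer

theorem statement1 (W : FunctorClass.{u}) (hW : IsWeakFundamentalLocalizer W)
    {A A' B B' : Type u} [SmallCategory A] [SmallCategory A'] [SmallCategory B]
    [SmallCategory B'] (u : A ⥤ B) (u' : A' ⥤ B') (v : A' ⥤ A) (w : B' ⥤ B)
    (α : v ⋙ u ⟶ u' ⋙ w) :
    IsExactSquare W u u' v w α ↔
      IsExactSquare W w.op v.op u'.op u.op (squareOpCell u u' v w α) := by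
  rw [hW.isExactSquare_op_iff_forall_squareFiber, hW.isExactSquare_iff_forall_squareFiber]
  simp only [hW.isAsphericalCat_op_iff]

end Paper
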